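/- Let 𝒳 be a nonempty set, n a positive integer, ℓ : [0,1] × {0,1} → ℝ a function that is convex in its first argument, and φ : {0,1}^n × 𝒳^n → ℝ an arbitrary function. Then sup_(x_1∈𝒳) inf_(p̂_1∈[0,1]) sup_(y_1∈{0,1}) ⋯ sup_(x_n∈𝒳) inf_(p̂_n∈[0,1]) sup_(y_n∈{0,1}) [Σ_(t=1)^n ℓ(p̂_t, y_t) − φ((y_1,…,y_n), (x_1,…,x_n))] = sup_𝐱 inf_(p̂_1∈[0,1]) sup_(y_1∈{0,1}) ⋯ inf_(p̂_n∈[0,1]) sup_(y_n∈{0,1}) [Σ_(t=1)^n ℓ(p̂_t, y_t) − φ((y_1,…,y_n), (x_1, x_2(y_1), …, x_n(y_1,…,y_(n−1))))], where the outer supremum on the right-hand side ranges over all depth-n 𝒳-valued binary trees 𝐱 and both alternated values are interpreted in the extended reals. -/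

import Mathlib

/-- The n-round alternated value sup_{x_t ∈ X} inf_{p̂_t ∈ [0,1]} sup_{y_t ∈ {0,1}} of a payoff
depending on the sequences (x_1,…,x_n), (p̂_1,…,p̂_n), (y_1,…,y_n). -/
noncomputable def gameVal {X : Type*} :
    (n : ℕ) → ((Fin n → X) → (Fin n → ℝ) → (Fin n → Bool) → EReal) → EReal
  | 0, payoff => payoff Fin.elim0 Fin.elim0 Fin.elim0
  | n + 1, payoff =>
      ⨆ x : X, ⨅ p : Set.Icc (0 : ℝ) 1, ⨆ y : Bool,
        gameVal n fun xs ps ys => payoff (Fin.cons x xs) (Fin.cons (p : ℝ) ps) (Fin.cons y ys)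

/-- The n-round alternated value inf_{p̂_t ∈ [0,1]} sup_{y_t ∈ {0,1}} of a payoff depending on
the sequences (p̂_1,…,p̂_n), (y_1,…,y_n) (no side-information player). -/
noncomputable def predVal :
    (n : ℕ) → ((Fin n → ℝ) → (Fin n → Bool) → EReal) → EReal
  | 0, payoff => payoff Fin.elim0 Fin.elim0
  | n + 1, payoff =>
      ⨅ p : Set.Icc (0 : ℝ) 1, ⨆ y : Bool,
        predVal n fun ps ys => payoff (Fin.cons (p : ℝ) ps) (Fin.cons y ys)

/-!
Induction on `n`, peeling off the first round. The payoff is additive over rounds, so the loss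
`ℓ(p̂₁, y₁)` separates from the value of the remaining game, and by the induction hypothesis the
first round reads `inf_p sup_y [ℓ(p, y) + sup_𝐱 V_y(𝐱)]`, where `V_y(𝐱)` is the value of the
remaining game against the tree `𝐱`. Choosing one near-optimal subtree for
each outcome `y` moves `sup_𝐱` outside `inf_p`; this needs only that `ℓ(·, y)` is bounded below
on `[0,1]`, which is what convexity provides. A root label together with one subtree per outcome
is exactly a tree of depth `n + 1`.
-/

open Set

noncomputable def EReal.addCoeOrderIso (r : ℝ) : EReal ≃o EReal where
  toFun x := r + x
  invFun x := x - r
  left_inv _ := EReal.add_sub_cancel_left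
  right_inv x := by simp only; rw [add_comm]; exact EReal.sub_add_cancel
  map_rel_iff' := (EReal.addLECancellable_coe r).add_le_add_iff_left

theorem EReal.coe_add_iSup {ι : Sort*} (r : ℝ) (f : ι → EReal) :
    (r : EReal) + ⨆ i, f i = ⨆ i, ((r : EReal) + f i) :=
  (addCoeOrderIso r).map_iSup f

theorem EReal.coe_add_iInf {ι : Sort*} (r : ℝ) (f : ι → EReal) :
    (r : EReal) + ⨅ i, f i = ⨅ i, ((r : EReal) + f i) :=
  (addCoeOrderIso r).map_iInf f

/-- The lower bound on `g` is what lets one `t` serve every `p` when `⨆ t, c t = ⊤`. -/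
theorem EReal.exists_forall_coe_le_add_of_lt_add_iSup {P ι : Type*} [Nonempty ι] {g : P → ℝ}
    (hg : BddBelow (range g)) (c : ι → EReal) {a b : ℝ} (hba : b < a) :
    ∃ t, ∀ p, (a : EReal) < g p + ⨆ t, c t → (b : EReal) ≤ g p + c t := by
  obtain ⟨m, hm⟩ := hg
  induction h : ⨆ t, c t using EReal.rec with
  | bot => exact ⟨Classical.arbitrary ι, fun p hp => by simp at hp⟩
  | top =>
    obtain ⟨t, ht⟩ := lt_iSup_iff.mp (h ▸ EReal.coe_lt_top (a - m))
    refine ⟨t, fun p _ => ?_⟩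
    calc (b : EReal) ≤ ((m + (a - m) : ℝ) : EReal) := by exact_mod_cast by linarith
      _ ≤ g p + c t := by
        rw [EReal.coe_add]
        exact add_le_add (EReal.coe_le_coe_iff.mpr (hm ⟨p, rfl⟩)) ht.le
  | coe r =>
    obtain ⟨t, ht⟩ := lt_iSup_iff.mp (h ▸ EReal.coe_lt_coe_iff.mpr (by linarith : r - (a - b) < r))
    refine ⟨t, fun p hp => ?_⟩
    rw [← EReal.coe_add, EReal.coe_lt_coe_iff] at hp
    calc (b : EReal) ≤ ((g p + (r - (a - b)) : ℝ) : EReal) := by exact_mod_cast by linarith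
      _ ≤ g p + c t := by
        rw [EReal.coe_add]
        exact add_le_add_right ht.le _

theorem EReal.iInf_iSup_coe_add_iSup {P Y ι : Type*} [Nonempty ι] (f : Y → P → ℝ)
    (hf : ∀ y, BddBelow (range (f y))) (c : Y → ι → EReal) :
    ⨅ p, ⨆ y, ((f y p : EReal) + ⨆ t, c y t) =
      ⨆ T : Y → ι, ⨅ p, ⨆ y, ((f y p : EReal) + c y (T y)) := by
  refine le_antisymm ?_ (iSup_le fun T => iInf_mono fun p => iSup_mono fun y =>
    add_le_add_right (le_iSup (c y) (T y)) _)
  refine EReal.ge_of_forall_gt_iff_ge.mp fun a ha => ?_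
  refine EReal.ge_of_forall_gt_iff_ge.mp fun b hb => ?_
  have hba : b < a := by exact_mod_cast hb
  choose T hT using fun y => exists_forall_coe_le_add_of_lt_add_iSup (hf y) (c y) hba
  refine le_iSup_of_le T (le_iInf fun p => ?_)
  obtain ⟨y, hy⟩ := lt_iSup_iff.mp (ha.trans_le (iInf_le _ p))
  exact le_iSup_of_le y (hT y p hy)

theorem iSup_fun_list_nil_cons {α β γ : Type*} [CompleteLattice γ]
    (F : β → (α → List α → β) → γ) :
    ⨆ x : List α → β, F (x []) (fun a l => x (a :: l)) = ⨆ b, ⨆ T : α → List α → β, F b T := by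
  refine le_antisymm (iSup_le fun x => le_iSup_of_le (x []) (le_iSup_of_le _ le_rfl)) ?_
  refine iSup_le fun b => iSup_le fun T => ?_
  exact le_iSup_of_le (fun | [] => b | a :: l => T a l) le_rfl

theorem ConvexOn.bddBelow_image_Icc {f : ℝ → ℝ} {a b : ℝ} (hf : ConvexOn ℝ (Icc a b) f) :
    BddBelow (f '' Icc a b) := by
  -- `f ((a + b) / 2) ≤ (f p + f (a + b - p)) / 2`, and `f ≤ max (f a) (f b)` on the segment.
  refine ⟨2 * f ((a + b) / 2) - max (f a) (f b), ?_⟩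
  rintro _ ⟨p, hp, rfl⟩
  have hab : a ≤ b := hp.1.trans hp.2
  have hq : a + b - p ∈ Icc a b := ⟨by linarith [hp.2], by linarith [hp.1]⟩
  have hmid := hf.2 hp hq (by norm_num : (0:ℝ) ≤ 1 / 2) (by norm_num : (0:ℝ) ≤ 1 / 2) (by norm_num)
  have hmax := hf.le_on_segment (left_mem_Icc.2 hab) (right_mem_Icc.2 hab)
    (by rwa [segment_eq_Icc hab])
  simp only [smul_eq_mul] at hmid
  rw [show 1 / 2 * p + 1 / 2 * (a + b - p) = (a + b) / 2 by ring] at hmid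
  linarith

section Game

variable {X : Type*} {n : ℕ}

theorem gameVal_coe_add (r : ℝ) (f : (Fin n → X) → (Fin n → ℝ) → (Fin n → Bool) → EReal) :
    gameVal n (fun xs ps ys => (r : EReal) + f xs ps ys) = r + gameVal n f := by
  induction n with
  | zero => rfl
  | succ n ih => simp only [gameVal, ih, EReal.coe_add_iSup, EReal.coe_add_iInf]

theorem predVal_coe_add (r : ℝ) (f : (Fin n → ℝ) → (Fin n → Bool) → EReal) :
    predVal n (fun ps ys => (r : EReal) + f ps ys) = r + predVal n f := by
  induction n with
  | zero => rfl
  | succ n ih => simp only [predVal, ih, EReal.coe_add_iSup, EReal.coe_add_iInf]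

/-- The path of a tree `x : List Bool → X` along outcomes `ys`: round `t` reads the node
`ys₀ ⋯ ys_{t-1}`. -/
def treePath (x : List Bool → X) (ys : Fin n → Bool) : Fin n → X :=
  fun t => x ((List.ofFn ys).take t)

theorem treePath_cons (x : List Bool → X) (y : Bool) (ys : Fin n → Bool) :
    treePath x (Fin.cons y ys) = Fin.cons (x []) (treePath (fun l => x (y :: l)) ys) := by
  funext t
  refine Fin.cases ?_ (fun s => ?_) t <;> simp [treePath, List.ofFn_succ]

def regret (ℓ : ℝ → Bool → ℝ) (φ : (Fin n → Bool) → (Fin n → X) → ℝ)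
    (xs : Fin n → X) (ps : Fin n → ℝ) (ys : Fin n → Bool) : EReal :=
  ((∑ t, ℓ (ps t) (ys t) - φ ys xs : ℝ) : EReal)

theorem regret_cons (ℓ : ℝ → Bool → ℝ) (φ : (Fin (n + 1) → Bool) → (Fin (n + 1) → X) → ℝ)
    (x : X) (xs : Fin n → X) (p : ℝ) (ps : Fin n → ℝ) (y : Bool) (ys : Fin n → Bool) :
    regret ℓ φ (Fin.cons x xs) (Fin.cons p ps) (Fin.cons y ys) =
      ℓ p y + regret ℓ (fun ys xs => φ (Fin.cons y ys) (Fin.cons x xs)) xs ps ys := by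
  rw [regret, regret, ← EReal.coe_add, Fin.sum_univ_succ]
  simp only [Fin.cons_zero, Fin.cons_succ]
  ring_nf

noncomputable def treeVal (ℓ : ℝ → Bool → ℝ) (φ : (Fin n → Bool) → (Fin n → X) → ℝ) (x : List Bool → X) :
    EReal :=
  predVal n fun ps ys => regret ℓ φ (treePath x ys) ps ys

theorem gameVal_succ_regret (ℓ : ℝ → Bool → ℝ)
    (φ : (Fin (n + 1) → Bool) → (Fin (n + 1) → X) → ℝ) :
    gameVal (n + 1) (regret ℓ φ) = ⨆ x, ⨅ p : Icc (0 : ℝ) 1, ⨆ y,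
      ((ℓ p y : EReal) + gameVal n (regret ℓ fun ys xs => φ (Fin.cons y ys) (Fin.cons x xs))) := by
  simp only [gameVal, regret_cons, gameVal_coe_add]

theorem treeVal_succ (ℓ : ℝ → Bool → ℝ) (φ : (Fin (n + 1) → Bool) → (Fin (n + 1) → X) → ℝ)
    (x : List Bool → X) :
    treeVal ℓ φ x = ⨅ p : Icc (0 : ℝ) 1, ⨆ y, ((ℓ p y : EReal) +
      treeVal ℓ (fun ys xs => φ (Fin.cons y ys) (Fin.cons (x []) xs)) fun l => x (y :: l)) := by
  simp only [treeVal, predVal, treePath_cons, regret_cons, predVal_coe_add]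

theorem gameVal_regret_eq_iSup_treeVal [Nonempty X] (ℓ : ℝ → Bool → ℝ)
    (hℓ : ∀ y, BddBelow ((fun p => ℓ p y) '' Icc 0 1)) (φ : (Fin n → Bool) → (Fin n → X) → ℝ) :
    gameVal n (regret ℓ φ) = ⨆ x, treeVal ℓ φ x := by
  induction n with
  | zero =>
    have hpath (x : List Bool → X) : treePath x Fin.elim0 = Fin.elim0 := funext fun t => t.elim0
    simp only [treeVal, predVal, hpath, iSup_const]
    rfl
  | succ n ih =>
    have hbdd (y : Bool) : BddBelow (range fun p : Icc (0 : ℝ) 1 => ℓ p y) := by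
      simpa only [image_eq_range] using hℓ y
    simp only [gameVal_succ_regret, ih, EReal.iInf_iSup_coe_add_iSup _ hbdd, treeVal_succ]
    exact (iSup_fun_list_nil_cons fun b T => ⨅ p : Icc (0 : ℝ) 1, ⨆ y, ((ℓ p y : EReal) +
      treeVal ℓ (fun ys xs => φ (Fin.cons y ys) (Fin.cons b xs)) (T y))).symm

end Game

theorem stmt5 {X : Type*} [Nonempty X] (n : ℕ)
    (ℓ : ℝ → Bool → ℝ) (hℓ : ∀ y, ConvexOn ℝ (Set.Icc (0 : ℝ) 1) (fun p => ℓ p y))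
    (φ : (Fin n → Bool) → (Fin n → X) → ℝ) :
    gameVal n (fun xs ps ys => (((∑ t, ℓ (ps t) (ys t)) - φ ys xs : ℝ) : EReal)) =
      ⨆ x : List Bool → X,
        predVal n (fun ps ys =>
          (((∑ t, ℓ (ps t) (ys t)) -
              φ ys (fun t => x ((List.ofFn ys).take t.val)) : ℝ) : EReal)) :=
  gameVal_regret_eq_iSup_treeVal ℓ (fun y => (hℓ y).bddBelow_image_Icc) φ
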